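/- Fix A > 0, α ≥ 0, and a Bond number B > 0. If h₁ ∈ M_A is a maximizer of Ω_{α,1} over M_A (i.e. Ω_{α,1}(h₁) ≥ Ω_{α,1}(h) for all h ∈ M_A), then the symmetrization h₃ defined by h₃(x) := (h₁(x) + h₁(−x))/2 belongs to M_A, satisfies h₃(−x) = h₃(x) for all x ∈ [−1,1], and is also a maximizer of Ω_{α,1} over M_A. -/

import Mathlib

/-- `h ∈ M_A`: continuous, nonnegative on `[-1,1]`, with `∫_{-1}^1 h = A`. -/
def MemMA (A : ℝ) (h : ℝ → ℝ) : Prop :=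
  ContinuousOn h (Set.Icc (-1 : ℝ) 1) ∧ (∀ x ∈ Set.Icc (-1 : ℝ) 1, 0 ≤ h x) ∧
    (∫ x in (-1 : ℝ)..1, h x) = A

/-- Admissible pairs `(ψ, ζ)` in `X_α`: `C¹` functions with `ζ(±1) = 0`, and
additionally `∫ ζ = 0` when `α = 0`. -/
def AdmissiblePair (α : ℝ) (ψ ζ : ℝ → ℝ) : Prop :=
  ContDiff ℝ 1 ψ ∧ ContDiff ℝ 1 ζ ∧ ζ (-1) = 0 ∧ ζ 1 = 0 ∧
    (α = 0 → (∫ x in (-1 : ℝ)..1, ζ x) = 0)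

/-- The energy `E_α(h; ψ, ζ)`. -/
noncomputable def energyC (B α : ℝ) (h ψ ζ : ℝ → ℝ) : ℝ :=
  (1 / 2) * (∫ x in (-1 : ℝ)..1, h x * ((deriv ψ x) ^ 2 + α ^ 2 * (ψ x) ^ 2)) +
    (1 / 2) * (∫ x in (-1 : ℝ)..1,
      ((1 + α ^ 2 / B) * (ζ x) ^ 2 + (1 / B) * (deriv ζ x) ^ 2))

/-- The fundamental shallow sloshing frequency
`Ω_{α,1}(h) = inf {E_α(h; ψ, ζ) : (ψ, ζ) ∈ X_α, G(ψ, ζ) = 1}`. -/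
noncomputable def Omega1 (B α : ℝ) (h : ℝ → ℝ) : ℝ :=
  sInf {E : ℝ | ∃ ψ ζ : ℝ → ℝ, AdmissiblePair α ψ ζ ∧
    (∫ x in (-1 : ℝ)..1, ψ x * ζ x) = 1 ∧ E = energyC B α h ψ ζ}

/-!
Proof idea: the energy is affine in the depth `h` and invariant under the reflection
`x ↦ -x` applied to `h`, `ψ` and `ζ` simultaneously. Hence `Ω_{α,1}`, an infimum of affine
functions of `h`, is concave and reflection invariant, so
`Ω(h₃) ≥ (Ω(h₁) + Ω(h₁(-·))) / 2 = Ω(h₁)`.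
-/

open Set

lemma integral_comp_neg_symm (a : ℝ) (f : ℝ → ℝ) :
    (∫ x in -a..a, f (-x)) = ∫ x in -a..a, f x := by
  simp [intervalIntegral.integral_comp_neg (a := -a) (b := a) f]

lemma neg_mem_Icc_neg_one_one {x : ℝ} (hx : x ∈ Icc (-1 : ℝ) 1) :
    -x ∈ Icc (-1 : ℝ) 1 := by
  rw [mem_Icc] at hx ⊢
  constructor <;> linarith [hx.1, hx.2]

lemma continuousOn_Icc_comp_neg {f : ℝ → ℝ} (hf : ContinuousOn f (Icc (-1) 1)) :
    ContinuousOn (fun x => f (-x)) (Icc (-1) 1) :=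
  hf.comp continuous_neg.continuousOn fun _ => neg_mem_Icc_neg_one_one

def depthProfiles : Set (ℝ → ℝ) :=
  {h | ContinuousOn h (Icc (-1) 1) ∧ ∀ x ∈ Icc (-1 : ℝ) 1, 0 ≤ h x}

lemma convex_depthProfiles : Convex ℝ depthProfiles := by
  rintro f ⟨hfc, hf⟩ g ⟨hgc, hg⟩ a b ha hb -
  refine ⟨(hfc.const_smul a).add (hgc.const_smul b), fun x hx => ?_⟩
  have := hf x hx
  have := hg x hx
  simp only [Pi.add_apply, Pi.smul_apply, smul_eq_mul]
  positivity

lemma MemMA.mem_depthProfiles {A : ℝ} {h : ℝ → ℝ} (hh : MemMA A h) : h ∈ depthProfiles :=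
  ⟨hh.1, hh.2.1⟩

lemma convex_memMA (A : ℝ) : Convex ℝ {h | MemMA A h} := by
  intro f hf g hg a b ha hb hab
  obtain ⟨hc, hnonneg⟩ :=
    convex_depthProfiles hf.mem_depthProfiles hg.mem_depthProfiles ha hb hab
  have hfi : IntervalIntegrable f MeasureTheory.volume (-1) 1 :=
    hf.1.intervalIntegrable_of_Icc (by norm_num)
  have hgi : IntervalIntegrable g MeasureTheory.volume (-1) 1 :=
    hg.1.intervalIntegrable_of_Icc (by norm_num)
  refine ⟨hc, hnonneg, ?_⟩
  simp only [Pi.add_apply, Pi.smul_apply, smul_eq_mul]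
  rw [intervalIntegral.integral_add (hfi.const_mul a) (hgi.const_mul b),
    intervalIntegral.integral_const_mul, intervalIntegral.integral_const_mul, hf.2.2, hg.2.2,
    ← add_mul, hab, one_mul]

lemma MemMA.comp_neg {A : ℝ} {h : ℝ → ℝ} (hh : MemMA A h) : MemMA A (fun x => h (-x)) := by
  obtain ⟨hc, hnonneg, hint⟩ := hh
  refine ⟨continuousOn_Icc_comp_neg hc, fun _ hx => hnonneg _ (neg_mem_Icc_neg_one_one hx), ?_⟩
  rw [integral_comp_neg_symm, hint]

lemma AdmissiblePair.comp_neg {α : ℝ} {ψ ζ : ℝ → ℝ} (h : AdmissiblePair α ψ ζ) :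
    AdmissiblePair α (fun x => ψ (-x)) (fun x => ζ (-x)) := by
  obtain ⟨hψ, hζ, hm, hp, hz⟩ := h
  exact ⟨hψ.comp contDiff_neg, hζ.comp contDiff_neg, by simpa using hp, by simpa using hm,
    fun h0 => by rw [integral_comp_neg_symm]; exact hz h0⟩

lemma energyC_comp_neg (B α : ℝ) (h ψ ζ : ℝ → ℝ) :
    energyC B α (fun x => h (-x)) (fun x => ψ (-x)) (fun x => ζ (-x)) =
      energyC B α h ψ ζ := by
  simp only [energyC, deriv_comp_neg, neg_sq]
  rw [integral_comp_neg_symm 1 (fun x => h x * (deriv ψ x ^ 2 + α ^ 2 * ψ x ^ 2)),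
    integral_comp_neg_symm 1 (fun x => (1 + α ^ 2 / B) * ζ x ^ 2 + 1 / B * deriv ζ x ^ 2)]

lemma energyC_nonneg {B α : ℝ} (hB : 0 ≤ B) {h : ℝ → ℝ}
    (hh : ∀ x ∈ Icc (-1 : ℝ) 1, 0 ≤ h x) (ψ ζ : ℝ → ℝ) :
    0 ≤ energyC B α h ψ ζ := by
  have hdepth : 0 ≤ ∫ x in (-1 : ℝ)..1, h x * ((deriv ψ x) ^ 2 + α ^ 2 * (ψ x) ^ 2) :=
    intervalIntegral.integral_nonneg (by norm_num) fun x hx => by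
      have := hh x hx
      positivity
  have hsurface : 0 ≤ ∫ x in (-1 : ℝ)..1,
      ((1 + α ^ 2 / B) * (ζ x) ^ 2 + (1 / B) * (deriv ζ x) ^ 2) :=
    intervalIntegral.integral_nonneg (by norm_num) fun _ _ => by positivity
  unfold energyC
  positivity

lemma energyC_smul_add_smul {B α a b : ℝ} (hab : a + b = 1) {f g ψ : ℝ → ℝ}
    (hf : ContinuousOn f (Icc (-1) 1)) (hg : ContinuousOn g (Icc (-1) 1))
    (hψ : ContDiff ℝ 1 ψ) (ζ : ℝ → ℝ) :
    energyC B α (a • f + b • g) ψ ζ =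
      a * energyC B α f ψ ζ + b * energyC B α g ψ ζ := by
  set q : ℝ → ℝ := fun x => (deriv ψ x) ^ 2 + α ^ 2 * (ψ x) ^ 2
  have hq : Continuous q :=
    ((hψ.continuous_deriv le_rfl).pow 2).add (continuous_const.mul (hψ.continuous.pow 2))
  have hfq : IntervalIntegrable (fun x => f x * q x) MeasureTheory.volume (-1) 1 :=
    (hf.mul hq.continuousOn).intervalIntegrable_of_Icc (by norm_num)
  have hgq : IntervalIntegrable (fun x => g x * q x) MeasureTheory.volume (-1) 1 :=
    (hg.mul hq.continuousOn).intervalIntegrable_of_Icc (by norm_num)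
  have hsplit : (∫ x in (-1 : ℝ)..1, (a • f + b • g) x * q x) =
      a * (∫ x in (-1 : ℝ)..1, f x * q x) + b * ∫ x in (-1 : ℝ)..1, g x * q x := by
    rw [← intervalIntegral.integral_const_mul, ← intervalIntegral.integral_const_mul,
      ← intervalIntegral.integral_add (hfq.const_mul a) (hgq.const_mul b)]
    congr 1 with x
    simp only [Pi.add_apply, Pi.smul_apply, smul_eq_mul]
    ring
  simp only [energyC]
  rw [hsplit]
  linear_combination (1 / 2 : ℝ) * (∫ x in (-1 : ℝ)..1,
      ((1 + α ^ 2 / B) * (ζ x) ^ 2 + (1 / B) * (deriv ζ x) ^ 2)) * hab.symm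

def energyLevels (B α : ℝ) (h : ℝ → ℝ) : Set ℝ :=
  {E : ℝ | ∃ ψ ζ : ℝ → ℝ, AdmissiblePair α ψ ζ ∧
    (∫ x in (-1 : ℝ)..1, ψ x * ζ x) = 1 ∧ E = energyC B α h ψ ζ}

lemma omega1_eq_sInf_energyLevels (B α : ℝ) (h : ℝ → ℝ) :
    Omega1 B α h = sInf (energyLevels B α h) := rfl

lemma energyLevels_nonempty_of_nonempty {B α : ℝ} {h : ℝ → ℝ} (h' : ℝ → ℝ)
    (hne : (energyLevels B α h').Nonempty) : (energyLevels B α h).Nonempty := by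
  obtain ⟨-, ψ, ζ, hadm, hG, -⟩ := hne
  exact ⟨_, ψ, ζ, hadm, hG, rfl⟩

lemma energyLevels_comp_neg_subset (B α : ℝ) (h : ℝ → ℝ) :
    energyLevels B α (fun x => h (-x)) ⊆ energyLevels B α h := by
  rintro E ⟨ψ, ζ, hadm, hG, rfl⟩
  refine ⟨fun x => ψ (-x), fun x => ζ (-x), hadm.comp_neg, ?_, ?_⟩
  · rw [integral_comp_neg_symm 1 (fun x => ψ x * ζ x), hG]
  · simpa using (energyC_comp_neg B α (fun x => h (-x)) ψ ζ).symm

lemma omega1_comp_neg (B α : ℝ) (h : ℝ → ℝ) :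
    Omega1 B α (fun x => h (-x)) = Omega1 B α h := by
  have hback := energyLevels_comp_neg_subset B α (fun x => h (-x))
  simp only [neg_neg] at hback
  rw [omega1_eq_sInf_energyLevels, omega1_eq_sInf_energyLevels,
    (energyLevels_comp_neg_subset B α h).antisymm hback]

lemma omega1_le_energyC {B α : ℝ} (hB : 0 ≤ B) {h ψ ζ : ℝ → ℝ}
    (hh : ∀ x ∈ Icc (-1 : ℝ) 1, 0 ≤ h x) (hadm : AdmissiblePair α ψ ζ)
    (hG : (∫ x in (-1 : ℝ)..1, ψ x * ζ x) = 1) : Omega1 B α h ≤ energyC B α h ψ ζ :=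
  csInf_le ⟨0, by rintro _ ⟨ψ', ζ', -, -, rfl⟩; exact energyC_nonneg hB hh ψ' ζ'⟩
    ⟨ψ, ζ, hadm, hG, rfl⟩

lemma concaveOn_omega1 {B : ℝ} (hB : 0 ≤ B) (α : ℝ) :
    ConcaveOn ℝ depthProfiles (Omega1 B α) := by
  refine ⟨convex_depthProfiles, fun f hf g hg a b ha hb hab => ?_⟩
  simp only [smul_eq_mul]
  by_cases hne : (energyLevels B α (a • f + b • g)).Nonempty
  · refine le_csInf hne ?_
    rintro _ ⟨ψ, ζ, hadm, hG, rfl⟩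
    rw [energyC_smul_add_smul hab hf.1 hg.1 hadm.1]
    exact add_le_add
      (mul_le_mul_of_nonneg_left (omega1_le_energyC hB hf.2 hadm hG) ha)
      (mul_le_mul_of_nonneg_left (omega1_le_energyC hB hg.2 hadm hG) hb)
  · -- The constraint set does not involve `h`, so every `Ω` is `sInf ∅ = 0`.
    have hempty (h : ℝ → ℝ) : Omega1 B α h = 0 := by
      rw [omega1_eq_sInf_energyLevels, not_nonempty_iff_eq_empty.mp
        (mt (energyLevels_nonempty_of_nonempty _) hne), Real.sInf_empty]
    simp only [hempty, mul_zero, add_zero, le_refl]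

theorem symmetric_maximizer_general (A B α : ℝ) (hB : 0 < B)
    (h₁ : ℝ → ℝ) (hh₁ : MemMA A h₁)
    (hmax : ∀ h : ℝ → ℝ, MemMA A h → Omega1 B α h ≤ Omega1 B α h₁) :
    MemMA A (fun x => (h₁ x + h₁ (-x)) / 2) ∧
    (∀ x ∈ Set.Icc (-1 : ℝ) 1,
      (h₁ (-x) + h₁ (-(-x))) / 2 = (h₁ x + h₁ (-x)) / 2) ∧
    (∀ h : ℝ → ℝ, MemMA A h →
      Omega1 B α h ≤ Omega1 B α (fun x => (h₁ x + h₁ (-x)) / 2)) := by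
  have hmid : (fun x => (h₁ x + h₁ (-x)) / 2) =
      (1 / 2 : ℝ) • h₁ + (1 / 2 : ℝ) • fun x => h₁ (-x) := by
    funext x
    simp only [Pi.add_apply, Pi.smul_apply, smul_eq_mul]
    ring
  have hconcave := (concaveOn_omega1 hB.le α).2 hh₁.mem_depthProfiles
    hh₁.comp_neg.mem_depthProfiles (by norm_num : (0 : ℝ) ≤ 1 / 2)
    (by norm_num : (0 : ℝ) ≤ 1 / 2) (by norm_num)
  rw [← hmid, omega1_comp_neg, smul_eq_mul] at hconcave
  refine ⟨hmid ▸ convex_memMA A hh₁ hh₁.comp_neg (by norm_num) (by norm_num) (by norm_num),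
    fun x _ => by rw [neg_neg, add_comm], fun h hh => ?_⟩
  linarith [hmax h hh]

theorem symmetric_maximizer (A B α : ℝ) (hA : 0 < A) (hB : 0 < B) (hα : 0 ≤ α)
    (h₁ : ℝ → ℝ) (hh₁ : MemMA A h₁)
    (hmax : ∀ h : ℝ → ℝ, MemMA A h → Omega1 B α h ≤ Omega1 B α h₁) :
    MemMA A (fun x => (h₁ x + h₁ (-x)) / 2) ∧
    (∀ x ∈ Set.Icc (-1 : ℝ) 1,
      (h₁ (-x) + h₁ (-(-x))) / 2 = (h₁ x + h₁ (-x)) / 2) ∧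
    (∀ h : ℝ → ℝ, MemMA A h →
      Omega1 B α h ≤ Omega1 B α (fun x => (h₁ x + h₁ (-x)) / 2)) :=
  symmetric_maximizer_general A B α hB h₁ hh₁ hmax
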